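/- arXiv:2101.12588 — 6 statements merged into one kernel-verified Lean document; each statement's English description precedes it below -/
import Mathlib

section
/- Let q ∈ (1,2], p its Hölder conjugate (1/p + 1/q = 1), and N, k, R, h positive reals with k ≤ N and h ≤ R. Define φ(q) = (Nh/R)^(1/q) * sqrt(((k/N)^(2/q) - (k/N)^2)/(q-1)). If R/h ≤ k, then φ is monotonically decreasing on (1,2], so its infimum over (1,2] is attained at q = 2. -/
open Real Set

private lemma key_ineq {b : ℝ} (hb0 : 0 < b) {s t : ℝ} (hs : 0 < s)
    (hst : s ≤ t) : s * (1 - b ^ t) ≤ t * (1 - b ^ s) := by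
  have ht : 0 < t := hs.trans_le hst
  have hl0 : 0 ≤ s / t := by positivity
  have hl1 : s / t ≤ 1 := (div_le_one ht).2 hst
  have hconv := convexOn_exp.2 (Set.mem_univ (t * Real.log b)) (Set.mem_univ 0)
      hl0 (show (0:ℝ) ≤ 1 - s / t by linarith) (by ring)
  simp only [smul_eq_mul, mul_zero, add_zero, Real.exp_zero, mul_one] at hconv
  have he : s / t * (t * Real.log b) = s * Real.log b := by field_simp
  rw [he] at hconv
  have hbs : b ^ s = Real.exp (s * Real.log b) := by
    rw [Real.rpow_def_of_pos hb0, mul_comm]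
  have hbt : b ^ t = Real.exp (t * Real.log b) := by
    rw [Real.rpow_def_of_pos hb0, mul_comm]
  rw [← hbs, ← hbt] at hconv
  have hmul := mul_le_mul_of_nonneg_left hconv ht.le
  have hexp : t * (s / t * b ^ t + (1 - s / t)) = s * b ^ t + t - s := by
    field_simp
    ring
  rw [hexp] at hmul
  linarith

/-- For `q ∈ (1,2]`, `φ q = (Nh/R)^(1/q) * sqrt(((k/N)^(2/q) - (k/N)^2)/(q-1))` is
monotonically decreasing on `(1,2]` when `R/h ≤ k`, so its infimum over `(1,2]`
is attained at `q = 2`. -/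
theorem stmt2 (N k R h : ℝ) (hh : 0 < h) (hhR : h ≤ R) (hk : 0 < k) (hkN : k ≤ N)
    (hdiv : R / h ≤ k) :
    AntitoneOn (fun q : ℝ => (N * h / R) ^ (1 / q) *
        Real.sqrt (((k / N) ^ (2 / q) - (k / N) ^ (2 : ℝ)) / (q - 1))) (Set.Ioc 1 2) ∧
    ∀ q ∈ Set.Ioc (1 : ℝ) 2,
      (N * h / R) ^ (1 / (2 : ℝ)) *
          Real.sqrt (((k / N) ^ (2 / (2 : ℝ)) - (k / N) ^ (2 : ℝ)) / ((2 : ℝ) - 1)) ≤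
        (N * h / R) ^ (1 / q) *
          Real.sqrt (((k / N) ^ (2 / q) - (k / N) ^ (2 : ℝ)) / (q - 1)) := by
  have hN : 0 < N := hk.trans_le hkN
  have hR : 0 < R := hh.trans_le hhR
  set b : ℝ := k / N with hbdef
  set A : ℝ := N * h / R with hAdef
  have hb0 : 0 < b := div_pos hk hN
  have hb1 : b ≤ 1 := (div_le_one hN).2 hkN
  have hA0 : 0 < A := by positivity
  have hRhk : R ≤ h * k := by
    have := (div_le_iff₀ hh).1 hdiv; linarith
  have hc1 : 1 ≤ A * b := by
    rw [hAdef, hbdef, div_mul_div_comm, le_div_iff₀ (by positivity)]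
    nlinarith
  set g : ℝ → ℝ := fun u => (A * b) ^ u * (u * (1 - b ^ (2 - u)) / (2 - u)) with hgdef
  -- monotonicity of g on [1,2)
  have hgmono : ∀ u v : ℝ, 1 ≤ u → u ≤ v → v < 2 → g u ≤ g v := by
    intro u v hu huv hv2
    have h2u : 0 < 2 - u := by linarith
    have h2v : 0 < 2 - v := by linarith
    have hXnn : ∀ w : ℝ, w ≤ 2 → 0 ≤ 1 - b ^ (2 - w) := by
      intro w hw
      have := Real.rpow_le_one hb0.le hb1 (by linarith : (0:ℝ) ≤ 2 - w)
      linarith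
    have hkey := key_ineq hb0 h2v (by linarith : 2 - v ≤ 2 - u)
    have hfrac : (1 - b ^ (2 - u)) / (2 - u) ≤ (1 - b ^ (2 - v)) / (2 - v) :=
      (div_le_div_iff₀ h2u h2v).2 (by nlinarith)
    have h1 : u * (1 - b ^ (2 - u)) / (2 - u) ≤ v * (1 - b ^ (2 - v)) / (2 - v) := by
      rw [mul_div_assoc, mul_div_assoc]
      exact mul_le_mul huv hfrac (div_nonneg (hXnn u (by linarith)) h2u.le) (by linarith)
    have h2 : (A * b) ^ u ≤ (A * b) ^ v := Real.rpow_le_rpow_of_exponent_le hc1 huv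
    exact mul_le_mul h2 h1
      (div_nonneg (mul_nonneg (by linarith) (hXnn u (by linarith))) h2u.le)
      (Real.rpow_nonneg (by positivity) v)
  -- identity: φ q = sqrt (g (2/q))
  have hident : ∀ q : ℝ, q ∈ Set.Ioc (1:ℝ) 2 →
      A ^ (1 / q) * Real.sqrt ((b ^ (2 / q) - b ^ (2:ℝ)) / (q - 1)) =
        Real.sqrt (g (2 / q)) := by
    intro q hq
    obtain ⟨hq1, hq2⟩ := hq
    have hq0 : 0 < q := by linarith
    have hq1' : 0 < q - 1 := by linarith
    have e1 : Real.sqrt (A ^ ((2:ℝ) / q)) = A ^ (1 / q) := by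
      rw [show (2:ℝ) / q = (1 / q) * 2 by ring, Real.rpow_mul hA0.le,
        Real.rpow_two, Real.sqrt_sq (Real.rpow_nonneg hA0.le _)]
    rw [← e1, ← Real.sqrt_mul (Real.rpow_nonneg hA0.le _)]
    congr 1
    have e2 : b ^ ((2:ℝ) / q) * b ^ (2 - 2 / q) = b ^ (2:ℝ) := by
      rw [← Real.rpow_add hb0]; ring_nf
    have h2q : 0 < 2 - 2 / q := by
      have : 2 / q < 2 := by rw [div_lt_iff₀ hq0]; linarith
      linarith
    rw [hgdef]
    simp only
    rw [Real.mul_rpow hA0.le hb0.le, ← e2]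
    have hq' : q ≠ 0 := hq0.ne'
    have h1' : q - 1 ≠ 0 := hq1'.ne'
    have h2' : (2 : ℝ) - 2 / q ≠ 0 := h2q.ne'
    set x := A ^ ((2:ℝ) / q) with hx
    set y := b ^ ((2:ℝ) / q) with hy
    set z := b ^ ((2:ℝ) - 2 / q) with hz
    have h3 : (2:ℝ) - 2 / q = 2 * (q - 1) / q := by field_simp
    rw [h3]
    field_simp
  have hant : AntitoneOn (fun q : ℝ => A ^ (1 / q) *
      Real.sqrt ((b ^ (2 / q) - b ^ (2 : ℝ)) / (q - 1))) (Set.Ioc 1 2) := by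
    intro q1 hq1 q2 hq2 h12
    simp only
    rw [hident q1 hq1, hident q2 hq2]
    apply Real.sqrt_le_sqrt
    have hq10 : 0 < q1 := by linarith [hq1.1]
    have hq20 : 0 < q2 := by linarith [hq2.1]
    refine hgmono (2 / q2) (2 / q1) ?_ ?_ ?_
    · rw [le_div_iff₀ hq20]; linarith [hq2.2]
    · exact div_le_div_of_nonneg_left (by norm_num) hq10 h12
    · rw [div_lt_iff₀ hq10]; linarith [hq1.1]
  refine ⟨hant, fun q hq => ?_⟩
  exact hant hq (by constructor <;> norm_num) hq.2
end

section
/- Let N ≥ 2 and 1 ≤ k < N be integers, and Z = {z ∈ {0,1}^N : Σᵢ zᵢ = k}. Consider unit costs and cost functions f_r(z) = Σᵢ rᵢ(1 - zᵢ). For any deterministic sequence of states z₁,…,z_T ∈ Z (where z_{t+1} may depend on r₁,…,r_t), the adversary choosing r_t = indicator vector of the complement of the support of z_t (one request per uncached file) forces Σₜ f_{r_t}(z_t) - min_{z∈Z} Σₜ f_{r_t}(z) ≥ k(1 - k/N) T. -/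
/-!
Against this adversary the policy misses every request, paying `N - k` per step, so
`T (N - k)` in total. Spread over the files, the same `T (N - k)` requests can be cached
statically: a heaviest `k`-set `S` of files receives at least a `k / N` share of them, since
exchanging a file of `S` for one outside cannot increase its weight, so every file in `S` is
requested at least as often as every file outside. Caching `S` therefore costs at most
`(1 - k / N) T (N - k)`, and the regret is at least `k (1 - k / N) T`.
-/

open Finset

section HeaviestSubset

variable {ι R : Type*} [Fintype ι] [DecidableEq ι] [CommRing R] [LinearOrder R]
  [IsOrderedRing R] (w : ι → R)

theorem card_mul_sum_le_card_mul_sum_of_forall_le {S : Finset ι}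
    (h : ∀ i ∈ S, ∀ j ∉ S, w j ≤ w i) :
    (#S : R) * ∑ i, w i ≤ Fintype.card ι * ∑ i ∈ S, w i := by
  have hpairs : 0 ≤ ∑ i ∈ S, ∑ j ∈ Sᶜ, (w i - w j) :=
    sum_nonneg fun i hi ↦ sum_nonneg fun j hj ↦ sub_nonneg.2 (h i hi j (mem_compl.1 hj))
  simp only [sum_sub_distrib, sum_const, nsmul_eq_mul, ← mul_sum] at hpairs
  rw [← sum_add_sum_compl S w, ← card_add_card_compl S]
  push_cast
  linear_combination hpairs

theorem exists_card_eq_mul_sum_le_card_mul_sum {k : ℕ} (hk : k ≤ Fintype.card ι) :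
    ∃ S : Finset ι, #S = k ∧ (k : R) * ∑ i, w i ≤ Fintype.card ι * ∑ i ∈ S, w i := by
  obtain ⟨S, hS, hmax⟩ := exists_max_image (powersetCard k univ) (fun S ↦ ∑ i ∈ S, w i)
    (powersetCard_nonempty.2 (by simpa using hk))
  rw [mem_powersetCard_univ] at hS
  refine ⟨S, hS, hS ▸ card_mul_sum_le_card_mul_sum_of_forall_le w fun i hi j hj ↦ ?_⟩
  have hj' : j ∉ S.erase i := fun h ↦ hj (mem_of_mem_erase h)
  have hswap : insert j (S.erase i) ∈ powersetCard k univ := by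
    rw [mem_powersetCard_univ, card_insert_of_notMem hj', card_erase_of_mem hi, ← hS,
      Nat.sub_add_cancel (card_pos.2 ⟨i, hi⟩)]
  have hle := hmax _ hswap
  rw [sum_insert hj', sum_erase_eq_sub hi] at hle
  linear_combination hle

end HeaviestSubset

theorem sum_mul_one_sub_ite_mem {ι R : Type*} [Fintype ι] [DecidableEq ι] [CommRing R]
    (w : ι → R) (S : Finset ι) :
    ∑ i, w i * (1 - if i ∈ S then 1 else 0) = ∑ i, w i - ∑ i ∈ S, w i := by
  simp only [mul_sub, mul_one, mul_ite, mul_zero, sum_sub_distrib, sum_ite_mem, univ_inter]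

theorem stmt11_general (N k T : ℕ) (hkN : k < N)
    (z : ℕ → Fin N → ℝ)
    (hz : ∀ t ∈ Finset.Icc 1 T, (∀ i, z t i = 0 ∨ z t i = 1) ∧ ∑ i, z t i = k)
    (r : ℕ → Fin N → ℝ) (hr : ∀ t i, r t i = 1 - z t i)
    (y : Fin N → ℝ)
    (hymin : ∀ y' : Fin N → ℝ, ((∀ i, y' i = 0 ∨ y' i = 1) ∧ ∑ i, y' i = k) →
      (∑ t ∈ Finset.Icc 1 T, ∑ i, r t i * (1 - y i)) ≤
        ∑ t ∈ Finset.Icc 1 T, ∑ i, r t i * (1 - y' i)) :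
    (k : ℝ) * (1 - (k : ℝ) / N) * T ≤
      (∑ t ∈ Finset.Icc 1 T, ∑ i, r t i * (1 - z t i)) -
        ∑ t ∈ Finset.Icc 1 T, ∑ i, r t i * (1 - y i) := by
  set R : Fin N → ℝ := fun i ↦ ∑ t ∈ Icc 1 T, r t i
  have hrequests : ∀ t ∈ Icc 1 T, ∑ i, r t i = N - k := fun t ht ↦ by
    simp [hr, sum_sub_distrib, (hz t ht).2]
  have hmisses : ∀ t ∈ Icc 1 T, ∑ i, r t i * (1 - z t i) = ∑ i, r t i := fun t ht ↦
    sum_congr rfl fun i _ ↦ by rcases (hz t ht).1 i with h | h <;> simp [hr, h]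
  have hpolicy : ∑ t ∈ Icc 1 T, ∑ i, r t i * (1 - z t i) = T * (N - k) := by
    rw [sum_congr rfl hmisses, sum_congr rfl hrequests]
    simp [mul_sub]
  have htotal : ∑ i, R i = T * (N - k) := by
    rw [sum_comm, sum_congr rfl hrequests]
    simp [mul_sub]
  obtain ⟨S, hS, hshare⟩ :=
    exists_card_eq_mul_sum_le_card_mul_sum R (k := k) (by simpa using hkN.le)
  rw [htotal, Fintype.card_fin] at hshare
  have hstatic : ∑ t ∈ Icc 1 T, ∑ i, r t i * (1 - y i) ≤ T * (N - k) - ∑ i ∈ S, R i :=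
    calc _ ≤ ∑ t ∈ Icc 1 T, ∑ i, r t i * (1 - if i ∈ S then 1 else 0) :=
          hymin _ ⟨fun i ↦ by by_cases h : i ∈ S <;> simp [h], by simp [hS]⟩
      _ = ∑ i, R i * (1 - if i ∈ S then 1 else 0) := by rw [sum_comm]; simp only [R, sum_mul]
      _ = _ := by rw [sum_mul_one_sub_ite_mem, htotal]
  have hN : (0 : ℝ) < N := by exact_mod_cast (Nat.zero_le k).trans_lt hkN
  have hbound : (k : ℝ) * (1 - k / N) * T ≤ ∑ i ∈ S, R i := by
    rw [← mul_le_mul_iff_of_pos_left hN]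
    field_simp
    linarith
  linarith

/-- Against the adversary requesting exactly the uncached files
(`r_t = 1 - z_t` coordinatewise), any deterministic integral caching policy has
regret at least `k(1 - k/N)T` w.r.t. the best static integral state. -/
theorem stmt11 (N k T : ℕ) (hN : 2 ≤ N) (hk : 1 ≤ k) (hkN : k < N)
    (z : ℕ → Fin N → ℝ)
    (hz : ∀ t ∈ Finset.Icc 1 T, (∀ i, z t i = 0 ∨ z t i = 1) ∧ ∑ i, z t i = k)
    (r : ℕ → Fin N → ℝ) (hr : ∀ t i, r t i = 1 - z t i)
    (y : Fin N → ℝ) (hy : (∀ i, y i = 0 ∨ y i = 1) ∧ ∑ i, y i = k)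
    (hymin : ∀ y' : Fin N → ℝ, ((∀ i, y' i = 0 ∨ y' i = 1) ∧ ∑ i, y' i = k) →
      (∑ t ∈ Finset.Icc 1 T, ∑ i, r t i * (1 - y i)) ≤
        ∑ t ∈ Finset.Icc 1 T, ∑ i, r t i * (1 - y' i)) :
    (k : ℝ) * (1 - (k : ℝ) / N) * T ≤
      (∑ t ∈ Finset.Icc 1 T, ∑ i, r t i * (1 - z t i)) -
        ∑ t ∈ Finset.Icc 1 T, ∑ i, r t i * (1 - y i) :=
  stmt11_general N k T hkN z hz r hr y hymin
end

section
/- Let z and z' be random vectors in Z = {z ∈ {0,1}^N : Σᵢ zᵢ = k} with E[z] = x and E[z'] = x' for x, x' ∈ X (the capped simplex), produced by the threshold-based online rounding procedure with the same uniform random seed ξ ∈ [0,1], where x' = x - δ e_u + δ e_v is an elementary mass movement of δ ≥ 0 from coordinate u to coordinate v (u ≠ v). Then P(z ≠ z') ≤ δ(|v - u| + 1), and consequently E[‖z' - z‖_{1,w'}] ≤ 2kN‖w'‖_∞ δ, where ‖y‖_{1,w'} = Σᵢ |yᵢ| w'ᵢ. -/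
open MeasureTheory

/-- Number of thresholds `ξ, ξ+1, ξ+2, …` crossed by the prefix sum `Σ_{j ≤ i} x_j`. -/
noncomputable def cumCount {N : ℕ} (x : Fin N → ℝ) (ξ : ℝ) (i : Fin N) : ℕ :=
  (⌊(∑ j ∈ Finset.univ.filter (fun j => j ≤ i), x j) - ξ⌋ + 1).toNat

/-- Number of thresholds crossed by the strict prefix sum `Σ_{j < i} x_j`. -/
noncomputable def prevCount {N : ℕ} (x : Fin N → ℝ) (ξ : ℝ) (i : Fin N) : ℕ :=
  (⌊(∑ j ∈ Finset.univ.filter (fun j => j < i), x j) - ξ⌋ + 1).toNat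

/-- Threshold-based online rounding with seed `ξ`. -/
noncomputable def roundPt {N : ℕ} (x : Fin N → ℝ) (ξ : ℝ) (i : Fin N) : ℝ :=
  (cumCount x ξ i : ℝ) - (prevCount x ξ i : ℝ)

/-!
Write `S m = ∑_{j < m} x j`. Coordinate `i` of the rounding counts the thresholds `ξ + ℤ` in
`(S i, S (i + 1)]`, so the rounding is determined by the integers `⌊S m - ξ⌋`. Moving mass `δ`
from `u` to `v` shifts by `δ` exactly the prefix sums with `min u v < m ≤ max u v`, and a shift
by `δ` changes `⌊S m - ξ⌋` only for a set of seeds `ξ ∈ (0, 1]` of measure at most `δ`; a union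
bound over these `|v - u|` indices bounds the probability that the roundings differ. Both
roundings have exactly `k` ones, so `‖z' - z‖_{1,w'} ≤ 2k‖w'‖_∞` whenever they differ, and
`|v - u| + 1 ≤ N` gives the expectation bound.
-/

namespace OnlineRounding

open Finset

theorem volume_floor_sub_ne_le {a b : ℝ} (hba : b ≤ a) :
    volume {ξ ∈ Set.Ioc (0 : ℝ) 1 | ⌊a - ξ⌋ ≠ ⌊b - ξ⌋} ≤ ENNReal.ofReal (a - b) := by
  set m := Int.fract a
  have hm0 : 0 ≤ m := Int.fract_nonneg a
  have hm1 : m < 1 := Int.fract_lt_one a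
  -- the floors differ iff an integer lies in `(b - ξ, a - ξ]`, and for `ξ ∈ (0, 1]` that integer
  -- is `⌊a⌋` or `⌊a⌋ - 1`
  have hcover : {ξ ∈ Set.Ioc (0 : ℝ) 1 | ⌊a - ξ⌋ ≠ ⌊b - ξ⌋} ⊆
      Set.Ioc (max (m - (a - b)) 0) m ∪ Set.Ioc (m + 1 - (a - b)) 1 := by
    rintro ξ ⟨⟨hξ0, hξ1⟩, hne⟩
    have hlt : ⌊b - ξ⌋ < ⌊a - ξ⌋ := (Int.floor_mono (by linarith)).lt_of_ne hne.symm
    have hgap : a - ξ - ⌊a - ξ⌋ < a - b := by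
      have h1 := Int.lt_floor_add_one (b - ξ)
      have h2 : (⌊b - ξ⌋ : ℝ) + 1 ≤ ⌊a - ξ⌋ := by exact_mod_cast hlt
      linarith
    have hfloor := Int.floor_le (a - ξ)
    have ha : (⌊a⌋ : ℝ) + m = a := Int.floor_add_fract a
    have hupper : ⌊a - ξ⌋ ≤ ⌊a⌋ := Int.floor_mono (by linarith)
    have hlower : ⌊a⌋ - 1 ≤ ⌊a - ξ⌋ := by
      rw [← Int.floor_sub_one]
      exact Int.floor_mono (by linarith)
    obtain h | h : ⌊a - ξ⌋ = ⌊a⌋ ∨ ⌊a - ξ⌋ = ⌊a⌋ - 1 := by omega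
    · rw [h] at hgap hfloor
      exact Or.inl ⟨max_lt (by linarith) hξ0, by linarith⟩
    · rw [h] at hgap
      push_cast at hgap
      exact Or.inr ⟨by linarith, hξ1⟩
  calc _ ≤ volume (Set.Ioc (max (m - (a - b)) 0) m ∪ Set.Ioc (m + 1 - (a - b)) 1) :=
        measure_mono hcover
    _ ≤ ENNReal.ofReal (m - max (m - (a - b)) 0) + ENNReal.ofReal (1 - (m + 1 - (a - b))) := by
        grw [measure_union_le, Real.volume_Ioc, Real.volume_Ioc]
    _ = ENNReal.ofReal (a - b) := by
        rcases le_total (a - b) m with h | h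
        · have hzero : ENNReal.ofReal (1 - (m + 1 - (a - b))) = 0 :=
            ENNReal.ofReal_of_nonpos (by linarith)
          rw [max_eq_left (by linarith), hzero, add_zero]
          ring_nf
        · rw [max_eq_right (by linarith), ← ENNReal.ofReal_add (by linarith) (by linarith)]
          ring_nf

theorem volume_floor_sub_ne_le_abs (a b : ℝ) :
    volume {ξ ∈ Set.Ioc (0 : ℝ) 1 | ⌊a - ξ⌋ ≠ ⌊b - ξ⌋} ≤ ENNReal.ofReal |a - b| := by
  wlog hba : b ≤ a generalizing a b
  · simpa only [ne_comm, abs_sub_comm] using this b a (by linarith)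
  rw [abs_of_nonneg (sub_nonneg.2 hba)]
  exact volume_floor_sub_ne_le hba

variable {N : ℕ}

noncomputable def prefixSum (x : Fin N → ℝ) (m : ℕ) : ℝ :=
  ∑ j ∈ univ.filter (fun j : Fin N => (j : ℕ) < m), x j

noncomputable def thresholdCount (x : Fin N → ℝ) (ξ : ℝ) (m : ℕ) : ℕ :=
  (⌊prefixSum x m - ξ⌋ + 1).toNat

theorem roundPt_eq_sub (x : Fin N → ℝ) (ξ : ℝ) (i : Fin N) :
    roundPt x ξ i = thresholdCount x ξ (i + 1) - thresholdCount x ξ i := by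
  have hle : univ.filter (fun j => j ≤ i) = univ.filter (fun j : Fin N => (j : ℕ) < i + 1) :=
    filter_congr fun j _ => by rw [Fin.le_def]; omega
  have hlt : univ.filter (fun j => j < i) = univ.filter (fun j : Fin N => (j : ℕ) < i) :=
    filter_congr fun j _ => Fin.lt_def
  rw [roundPt, cumCount, prevCount, hle, hlt]
  rfl

theorem roundPt_eq_of_floor_eq {x x' : Fin N → ℝ} {ξ : ℝ}
    (h : ∀ m, ⌊prefixSum x m - ξ⌋ = ⌊prefixSum x' m - ξ⌋) : roundPt x ξ = roundPt x' ξ := by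
  funext i
  simp only [roundPt_eq_sub, thresholdCount, h]

theorem prefixSum_mono {x : Fin N → ℝ} (hx : ∀ i, 0 ≤ x i) : Monotone (prefixSum x) :=
  fun _ _ h => sum_le_sum_of_subset_of_nonneg (monotone_filter_right _ fun _ _ hj => hj.trans_le h)
    fun i _ _ => hx i

theorem roundPt_nonneg {x : Fin N → ℝ} (hx : ∀ i, 0 ≤ x i) (ξ : ℝ) (i : Fin N) :
    0 ≤ roundPt x ξ i := by
  rw [roundPt_eq_sub, sub_nonneg, Nat.cast_le, thresholdCount, thresholdCount]
  have := Int.floor_mono (sub_le_sub_right (prefixSum_mono hx (Nat.le_add_right i 1)) ξ)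
  omega

theorem sum_roundPt {k : ℕ} {x : Fin N → ℝ} (hsum : ∑ i, x i = k) {ξ : ℝ}
    (hξ : ξ ∈ Set.Ioc (0 : ℝ) 1) : ∑ i, roundPt x ξ i = k := by
  obtain ⟨hξ0, hξ1⟩ := hξ
  have h0 : thresholdCount x ξ 0 = 0 := by
    have : ⌊-ξ⌋ = -1 := Int.floor_eq_iff.2 ⟨by push_cast; linarith, by push_cast; linarith⟩
    simp [thresholdCount, prefixSum, this]
  have hN : thresholdCount x ξ N = k := by
    have hall : prefixSum x N = k := by
      rw [prefixSum, filter_true_of_mem fun j _ => j.isLt, hsum]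
    have : ⌊(k : ℝ) - ξ⌋ = k - 1 := Int.floor_eq_iff.2 ⟨by push_cast; linarith, by push_cast; linarith⟩
    rw [thresholdCount, hall, this]
    omega
  simp only [roundPt_eq_sub]
  rw [Fin.sum_univ_eq_sum_range (fun m => (thresholdCount x ξ (m + 1) : ℝ) - thresholdCount x ξ m),
    sum_range_sub (fun m => (thresholdCount x ξ m : ℝ)), h0, hN, Nat.cast_zero, sub_zero]

section Move

variable {x x' : Fin N → ℝ} {u v : Fin N} {δ : ℝ}

theorem prefixSum_move
    (hx' : ∀ i, x' i = x i - (if i = u then δ else 0) + (if i = v then δ else 0)) (m : ℕ) :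
    prefixSum x' m = prefixSum x m - (if (u : ℕ) < m then δ else 0) +
      (if (v : ℕ) < m then δ else 0) := by
  simp only [prefixSum, hx', sum_add_distrib, sum_sub_distrib, sum_ite_eq', mem_filter, mem_univ,
    true_and]

theorem volume_roundPt_ne_le
    (hx' : ∀ i, x' i = x i - (if i = u then δ else 0) + (if i = v then δ else 0)) (hδ : 0 ≤ δ) :
    volume {ξ ∈ Set.Ioc (0 : ℝ) 1 | roundPt x ξ ≠ roundPt x' ξ} ≤
      ENNReal.ofReal (δ * |((v : ℕ) : ℝ) - ((u : ℕ) : ℝ)|) := by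
  set window := Ioc (min (u : ℕ) v) (max (u : ℕ) v)
  set A : ℕ → Set ℝ := fun m => {ξ ∈ Set.Ioc (0 : ℝ) 1 | ⌊prefixSum x m - ξ⌋ ≠ ⌊prefixSum x' m - ξ⌋}
  have hcover : {ξ ∈ Set.Ioc (0 : ℝ) 1 | roundPt x ξ ≠ roundPt x' ξ} ⊆ ⋃ m ∈ window, A m := by
    rintro ξ ⟨hξ, hne⟩
    obtain ⟨m, hm⟩ : ∃ m, ⌊prefixSum x m - ξ⌋ ≠ ⌊prefixSum x' m - ξ⌋ := by
      by_contra! h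
      exact hne (roundPt_eq_of_floor_eq h)
    refine Set.mem_biUnion (x := m) ?_ ⟨hξ, hm⟩
    by_contra hmw
    apply hm
    rw [prefixSum_move hx' m]
    simp only [window, coe_Ioc, Set.mem_Ioc] at hmw
    split_ifs <;> first | omega | ring_nf
  have hA : ∀ m, volume (A m) ≤ ENNReal.ofReal δ := fun m => by
    refine (volume_floor_sub_ne_le_abs _ _).trans (ENNReal.ofReal_le_ofReal ?_)
    rw [prefixSum_move hx' m]
    split_ifs <;> simp [abs_of_nonneg hδ, hδ]
  have hcard : ((#window : ℕ) : ℝ) = |((v : ℕ) : ℝ) - ((u : ℕ) : ℝ)| := by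
    rw [Nat.card_Ioc]
    rcases le_total (u : ℕ) v with h | h
    · rw [max_eq_right h, min_eq_left h, Nat.cast_sub h, abs_of_nonneg (by simpa using h)]
    · rw [max_eq_left h, min_eq_right h, Nat.cast_sub h, abs_of_nonpos (by simpa using h)]
      ring
  calc _ ≤ volume (⋃ m ∈ window, A m) := measure_mono hcover
    _ ≤ ∑ m ∈ window, volume (A m) := measure_biUnion_finset_le _ _
    _ ≤ ∑ _m ∈ window, ENNReal.ofReal δ := sum_le_sum fun m _ => hA m
    _ = ENNReal.ofReal (δ * |((v : ℕ) : ℝ) - ((u : ℕ) : ℝ)|) := by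
        rw [sum_const, nsmul_eq_mul, ← hcard, mul_comm, ENNReal.ofReal_mul hδ, ENNReal.ofReal_natCast]

end Move

theorem sum_abs_sub_mul_le {ι : Type*} [Fintype ι] {a b w : ι → ℝ} {W : ℝ} (ha : ∀ i, 0 ≤ a i)
    (hb : ∀ i, 0 ≤ b i) (hw : ∀ i, 0 ≤ w i) (hwW : ∀ i, w i ≤ W) :
    ∑ i, |b i - a i| * w i ≤ (∑ i, a i + ∑ i, b i) * W := by
  rw [← sum_add_distrib, sum_mul]
  refine sum_le_sum fun i _ => mul_le_mul ?_ (hwW i) (hw i) (by linarith [ha i, hb i])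
  rw [abs_sub_le_iff]
  constructor <;> linarith [ha i, hb i]

theorem setIntegral_le_mul_measureReal_of_eq_zero {α : Type*} [MeasurableSpace α] {μ : Measure α}
    {f : α → ℝ} {s t : Set α} {C : ℝ} (ht : MeasurableSet t) (hst : s ⊆ t) (hs : μ s < ⊤)
    (hzero : ∀ y ∈ t \ s, f y = 0) (hC : ∀ y ∈ s, |f y| ≤ C) :
    ∫ y in t, f y ∂μ ≤ C * μ.real s := by
  rw [setIntegral_eq_of_subset_of_forall_sdiff_eq_zero ht hst hzero]
  exact (le_abs_self _).trans (norm_setIntegral_le_of_norm_le_const hs fun y hy => (Real.norm_eq_abs _).trans_le (hC y hy))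

theorem integral_weighted_dist_roundPt_le {k : ℕ} {x x' w : Fin N → ℝ} {W : ℝ}
    (hx : (∀ i, 0 ≤ x i) ∧ ∑ i, x i = k) (hx' : (∀ i, 0 ≤ x' i) ∧ ∑ i, x' i = k)
    (hw : ∀ i, 0 ≤ w i) (hwW : ∀ i, w i ≤ W) :
    ∫ ξ in Set.Ioc (0 : ℝ) 1, ∑ i, |roundPt x' ξ i - roundPt x ξ i| * w i ≤
      2 * k * W * volume.real {ξ ∈ Set.Ioc (0 : ℝ) 1 | roundPt x ξ ≠ roundPt x' ξ} := by
  refine setIntegral_le_mul_measureReal_of_eq_zero measurableSet_Ioc (fun ξ hξ => hξ.1)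
    ((measure_mono fun ξ hξ => hξ.1).trans_lt (by simp)) ?_ ?_
  · rintro ξ ⟨hξ, hne⟩
    have heq : roundPt x ξ = roundPt x' ξ := by_contra fun h => hne ⟨hξ, h⟩
    simp [heq]
  · rintro ξ ⟨hξ, -⟩
    rw [abs_of_nonneg (sum_nonneg fun i _ => mul_nonneg (abs_nonneg _) (hw i))]
    refine (sum_abs_sub_mul_le (roundPt_nonneg hx.1 ξ) (roundPt_nonneg hx'.1 ξ) hw hwW).trans_eq ?_
    rw [sum_roundPt hx.2 hξ, sum_roundPt hx'.2 hξ]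
    ring

theorem abs_sub_add_one_le (u v : Fin N) : |((v : ℕ) : ℝ) - ((u : ℕ) : ℝ)| + 1 ≤ N := by
  have hu : ((u : ℕ) : ℝ) + 1 ≤ N := by exact_mod_cast u.isLt
  have hv : ((v : ℕ) : ℝ) + 1 ≤ N := by exact_mod_cast v.isLt
  rw [← le_sub_iff_add_le, abs_sub_le_iff]
  constructor <;> linarith [(u : ℕ).cast_nonneg (α := ℝ), (v : ℕ).cast_nonneg (α := ℝ)]

end OnlineRounding

theorem stmt12_general (N k : ℕ) (x x' : Fin N → ℝ)
    (hx : (∀ i, x i ∈ Set.Icc (0 : ℝ) 1) ∧ ∑ i, x i = k)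
    (hx'mem : (∀ i, x' i ∈ Set.Icc (0 : ℝ) 1) ∧ ∑ i, x' i = k)
    (u v : Fin N) (δ : ℝ) (hδ : 0 ≤ δ)
    (hx' : ∀ i, x' i = x i - (if i = u then δ else 0) + (if i = v then δ else 0))
    (w' : Fin N → ℝ) (hw' : ∀ i, 0 ≤ w' i) :
    volume {ξ : ℝ | ξ ∈ Set.Ioc (0 : ℝ) 1 ∧ roundPt x ξ ≠ roundPt x' ξ} ≤
      ENNReal.ofReal (δ * (|((v : ℕ) : ℝ) - ((u : ℕ) : ℝ)| + 1)) ∧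
    (∫ ξ in Set.Ioc (0 : ℝ) 1, ∑ i, |roundPt x' ξ i - roundPt x ξ i| * w' i) ≤
      2 * (k : ℝ) * (N : ℝ) * (Finset.univ.sup' ⟨u, Finset.mem_univ u⟩ w') * δ := by
  set L := |((v : ℕ) : ℝ) - ((u : ℕ) : ℝ)|
  set W := Finset.univ.sup' ⟨u, Finset.mem_univ u⟩ w'
  have hvol := OnlineRounding.volume_roundPt_ne_le hx' hδ
  have hLN : L + 1 ≤ N := OnlineRounding.abs_sub_add_one_le u v
  have hwW : ∀ i, w' i ≤ W := fun i => Finset.le_sup' w' (Finset.mem_univ i)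
  have hW : 0 ≤ W := (hw' u).trans (hwW u)
  refine ⟨hvol.trans (ENNReal.ofReal_le_ofReal (by nlinarith [abs_nonneg L])), ?_⟩
  calc _ ≤ 2 * k * W * volume.real {ξ ∈ Set.Ioc (0 : ℝ) 1 | roundPt x ξ ≠ roundPt x' ξ} :=
        OnlineRounding.integral_weighted_dist_roundPt_le ⟨fun i => (hx.1 i).1, hx.2⟩
          ⟨fun i => (hx'mem.1 i).1, hx'mem.2⟩ hw' hwW
    _ ≤ 2 * k * W * (δ * L) := by
        gcongr
        exact ENNReal.toReal_le_of_le_ofReal (by positivity) hvol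
    _ ≤ 2 * k * N * W * δ := by
        have : 0 ≤ 2 * k * W * δ := by positivity
        nlinarith

/-- Under an elementary mass movement `x' = x - δe_u + δe_v`, the roundings of `x` and
`x'` coupled via the same uniform seed `ξ` differ with probability at most
`δ(|v-u|+1)`, and `E[‖z' - z‖_{1,w'}] ≤ 2kN‖w'‖_∞ δ`. -/
theorem stmt12 (N k : ℕ) (hk : 1 ≤ k) (x x' : Fin N → ℝ)
    (hx : (∀ i, x i ∈ Set.Icc (0 : ℝ) 1) ∧ ∑ i, x i = k)
    (hx'mem : (∀ i, x' i ∈ Set.Icc (0 : ℝ) 1) ∧ ∑ i, x' i = k)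
    (u v : Fin N) (huv : u ≠ v) (δ : ℝ) (hδ : 0 ≤ δ)
    (hx' : ∀ i, x' i = x i - (if i = u then δ else 0) + (if i = v then δ else 0))
    (w' : Fin N → ℝ) (hw' : ∀ i, 0 ≤ w' i) :
    volume {ξ : ℝ | ξ ∈ Set.Ioc (0 : ℝ) 1 ∧ roundPt x ξ ≠ roundPt x' ξ} ≤
      ENNReal.ofReal (δ * (|((v : ℕ) : ℝ) - ((u : ℕ) : ℝ)| + 1)) ∧
    (∫ ξ in Set.Ioc (0 : ℝ) 1, ∑ i, |roundPt x' ξ i - roundPt x ξ i| * w' i) ≤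
      2 * (k : ℝ) * (N : ℝ) * (Finset.univ.sup' ⟨u, Finset.mem_univ u⟩ w') * δ :=
  stmt12_general N k x x' hx hx'mem u v δ hδ hx' w' hw'
end

section
/- Given x ∈ X = {x ∈ [0,1]^N : Σᵢ xᵢ = k} (k a positive integer) and ξ uniform on [0,1], the threshold rounding z defined by selecting index i whenever Σ_{j≤i} x_j ≥ ξ + (number of previously selected indices) satisfies: (a) z ∈ {0,1}^N with exactly k ones, and (b) P(z_i = 1) = x_i for every i. -/
open MeasureTheory

private lemma floor_ge_neg_one {S ξ : ℝ} (hS : 0 ≤ S) (hξ : ξ ≤ 1) : -1 ≤ ⌊S - ξ⌋ :=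
  Int.le_floor.mpr (by push_cast; linarith)

private lemma toNat_cast_real {S ξ : ℝ} (hS : 0 ≤ S) (hξ : ξ ≤ 1) :
    (((⌊S - ξ⌋ + 1).toNat : ℕ) : ℝ) = (⌊S - ξ⌋ : ℝ) + 1 := by
  have h : 0 ≤ ⌊S - ξ⌋ + 1 := by linarith [floor_ge_neg_one hS hξ]
  have := Int.toNat_of_nonneg h
  exact_mod_cast congrArg (fun z : ℤ => (z : ℝ)) this

private lemma measure_key (S xi : ℝ) (hS : 0 ≤ S) (hx0 : 0 ≤ xi) (hx1 : xi ≤ 1) :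
    volume {ξ : ℝ | ξ ∈ Set.Ioc (0:ℝ) 1 ∧ ⌊S + xi - ξ⌋ = ⌊S - ξ⌋ + 1} =
      ENNReal.ofReal xi := by
  set c := Int.fract S with hc
  have hc0 : 0 ≤ c := Int.fract_nonneg S
  have hc1 : c < 1 := Int.fract_lt_one S
  have hm : (⌊S⌋ : ℝ) = S - c := by rw [hc, Int.fract]; ring
  have hset : {ξ : ℝ | ξ ∈ Set.Ioc (0:ℝ) 1 ∧ ⌊S + xi - ξ⌋ = ⌊S - ξ⌋ + 1}
      = Set.Ioc 0 (c + xi - 1) ∪ Set.Ioc c (min (c + xi) 1) := by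
    ext ξ
    simp only [Set.mem_setOf_eq, Set.mem_Ioc, Set.mem_union, le_min_iff]
    constructor
    · rintro ⟨⟨h0, h1⟩, hfl⟩
      by_cases hξc : ξ ≤ c
      · left
        have hfloor : ⌊S - ξ⌋ = ⌊S⌋ := by
          rw [Int.floor_eq_iff]; constructor <;> push_cast <;> linarith
        rw [hfloor] at hfl
        have := Int.floor_le (S + xi - ξ)
        rw [hfl] at this; push_cast at this
        exact ⟨h0, by linarith⟩
      · right
        push_neg at hξc
        have hfloor : ⌊S - ξ⌋ = ⌊S⌋ - 1 := by
          rw [Int.floor_eq_iff]; constructor <;> push_cast <;> linarith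
        rw [hfloor] at hfl
        have := Int.floor_le (S + xi - ξ)
        rw [hfl] at this; push_cast at this
        exact ⟨hξc, ⟨by linarith, h1⟩⟩
    · rintro (⟨h0, h1⟩ | ⟨h0, h1, h2⟩)
      · have hξc : ξ ≤ c := by linarith
        have hξ1 : ξ ≤ 1 := by linarith
        have hfloor : ⌊S - ξ⌋ = ⌊S⌋ := by
          rw [Int.floor_eq_iff]; constructor <;> push_cast <;> linarith
        have hfloor2 : ⌊S + xi - ξ⌋ = ⌊S⌋ + 1 := by
          rw [Int.floor_eq_iff]; constructor <;> push_cast <;> linarith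
        exact ⟨⟨h0, hξ1⟩, by rw [hfloor, hfloor2]⟩
      · have hξ0 : 0 < ξ := lt_of_le_of_lt hc0 h0
        have hfloor : ⌊S - ξ⌋ = ⌊S⌋ - 1 := by
          rw [Int.floor_eq_iff]; constructor <;> push_cast <;> linarith
        have hfloor2 : ⌊S + xi - ξ⌋ = ⌊S⌋ := by
          rw [Int.floor_eq_iff]; constructor <;> push_cast <;> linarith
        exact ⟨⟨hξ0, h2⟩, by rw [hfloor, hfloor2]; ring⟩
  rw [hset, measure_union _ measurableSet_Ioc]
  · rw [Real.volume_Ioc, Real.volume_Ioc]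
    by_cases hcx : c + xi ≤ 1
    · rw [min_eq_left hcx, ENNReal.ofReal_eq_zero.mpr (by linarith), zero_add]
      congr 1; ring
    · push_neg at hcx
      rw [min_eq_right (le_of_lt hcx),
        ← ENNReal.ofReal_add (by linarith) (by linarith)]
      congr 1; ring
  · rw [Set.disjoint_left]
    rintro ξ ⟨_, h1⟩ ⟨h2, _⟩
    linarith

/-- (a) The threshold rounding of `x` in the capped simplex is a 0/1 vector with
exactly `k` ones; (b) for `ξ` uniform on `(0,1]`, `P(z_i = 1) = x_i`. -/
theorem stmt13 (N k : ℕ) (hk : 1 ≤ k) (x : Fin N → ℝ)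
    (hx : (∀ i, x i ∈ Set.Icc (0 : ℝ) 1) ∧ ∑ i, x i = k) :
    (∀ ξ ∈ Set.Ioc (0 : ℝ) 1,
      (∀ i, roundPt x ξ i = 0 ∨ roundPt x ξ i = 1) ∧ (∑ i, roundPt x ξ i) = k) ∧
    (∀ i, volume {ξ : ℝ | ξ ∈ Set.Ioc (0 : ℝ) 1 ∧ roundPt x ξ i = 1} =
      ENNReal.ofReal (x i)) := by
  obtain ⟨hxi, hsum⟩ := hx
  set A : Fin N → ℝ := fun i => ∑ j ∈ Finset.univ.filter (fun j => j ≤ i), x j with hA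
  set B : Fin N → ℝ := fun i => ∑ j ∈ Finset.univ.filter (fun j => j < i), x j with hB
  have hA0 : ∀ i, 0 ≤ A i := fun i => Finset.sum_nonneg (fun j _ => (hxi j).1)
  have hB0 : ∀ i, 0 ≤ B i := fun i => Finset.sum_nonneg (fun j _ => (hxi j).1)
  have hAB : ∀ i, A i = B i + x i := by
    intro i
    have hf : Finset.univ.filter (fun j => j ≤ i)
        = insert i (Finset.univ.filter (fun j => j < i)) := by
      ext j
      simp only [Finset.mem_filter, Finset.mem_univ, true_and, Finset.mem_insert]
      rw [le_iff_lt_or_eq]; tauto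
    simp only [hA, hB]
    rw [hf, Finset.sum_insert (by simp)]
    ring
  have hABle : ∀ i, B i ≤ A i := fun i => by rw [hAB i]; linarith [(hxi i).1]
  have hround : ∀ ξ ∈ Set.Ioc (0:ℝ) 1, ∀ i,
      roundPt x ξ i = (⌊A i - ξ⌋ : ℝ) - (⌊B i - ξ⌋ : ℝ) := by
    intro ξ hξ i
    rw [roundPt, cumCount, prevCount]
    rw [toNat_cast_real (hA0 i) hξ.2, toNat_cast_real (hB0 i) hξ.2]
    ring
  constructor
  · intro ξ hξ
    have hfl01 : ∀ i, ⌊A i - ξ⌋ = ⌊B i - ξ⌋ ∨ ⌊A i - ξ⌋ = ⌊B i - ξ⌋ + 1 := by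
      intro i
      have h1 : ⌊B i - ξ⌋ ≤ ⌊A i - ξ⌋ := Int.floor_le_floor (by linarith [hABle i])
      have h2 : ⌊A i - ξ⌋ ≤ ⌊B i - ξ⌋ + 1 := by
        have hle : A i - ξ ≤ (B i - ξ) + 1 := by linarith [hAB i, (hxi i).2]
        calc ⌊A i - ξ⌋ ≤ ⌊(B i - ξ) + 1⌋ := Int.floor_le_floor hle
          _ = ⌊B i - ξ⌋ + 1 := by rw [Int.floor_add_one]
      omega
    constructor
    · intro i
      rw [hround ξ hξ i]
      rcases hfl01 i with h | h <;> rw [h] <;> [left; right] <;> push_cast <;> ring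
    · -- telescoping sum
      set f : ℕ → ℝ := fun n =>
        (⌊(∑ j ∈ Finset.univ.filter (fun j : Fin N => (j : ℕ) < n), x j) - ξ⌋ : ℝ) + 1
        with hf
      have hcum : ∀ i : Fin N, roundPt x ξ i = f (i.val + 1) - f i.val := by
        intro i
        rw [hround ξ hξ i, hf]
        have e1 : Finset.univ.filter (fun j : Fin N => (j : ℕ) < i.val + 1)
            = Finset.univ.filter (fun j => j ≤ i) := by
          ext j; simp only [Finset.mem_filter, Finset.mem_univ, true_and, Fin.le_def, Nat.lt_succ_iff]
        have e2 : Finset.univ.filter (fun j : Fin N => (j : ℕ) < i.val)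
            = Finset.univ.filter (fun j => j < i) := by
          ext j; simp only [Finset.mem_filter, Finset.mem_univ, true_and, Fin.lt_def]
        simp only [e1, e2]
        ring
      have hsum' : ∑ i, roundPt x ξ i = f N - f 0 := by
        rw [Finset.sum_congr rfl (fun i _ => hcum i)]
        rw [← Finset.sum_range (fun n => f (n + 1) - f n)]
        exact Finset.sum_range_sub f N
      have hf0 : f 0 = 0 := by
        have : Finset.univ.filter (fun j : Fin N => (j : ℕ) < 0) = ∅ := by
          ext j; simp
        rw [hf]; simp only [this, Finset.sum_empty, zero_sub]
        have : ⌊-ξ⌋ = -1 := by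
          rw [Int.floor_eq_iff]; constructor <;> push_cast <;> [linarith [hξ.2]; linarith [hξ.1]]
        rw [this]; push_cast; ring
      have hfN : f N = k := by
        have : Finset.univ.filter (fun j : Fin N => (j : ℕ) < N) = Finset.univ := by
          ext j; simp [j.isLt]
        rw [hf]; simp only [this, hsum]
        have : ⌊(k : ℝ) - ξ⌋ = (k : ℤ) - 1 := by
          rw [Int.floor_eq_iff]; constructor <;> push_cast <;> [linarith [hξ.2]; linarith [hξ.1]]
        rw [this]; push_cast; ring
      rw [hsum', hf0, hfN]; ring
  · intro i
    have heq : {ξ : ℝ | ξ ∈ Set.Ioc (0 : ℝ) 1 ∧ roundPt x ξ i = 1}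
        = {ξ : ℝ | ξ ∈ Set.Ioc (0:ℝ) 1 ∧ ⌊B i + x i - ξ⌋ = ⌊B i - ξ⌋ + 1} := by
      ext ξ
      simp only [Set.mem_setOf_eq, and_congr_right_iff]
      intro hξ
      rw [hround ξ hξ i, hAB i]
      constructor
      · intro h
        have h' : (⌊B i + x i - ξ⌋ : ℝ) = (⌊B i - ξ⌋ : ℝ) + 1 := by linarith
        exact_mod_cast h'
      · intro h
        rw [h]; push_cast; ring
    rw [heq]
    exact measure_key (B i) (x i) (hB0 i) (hxi i).1 (hxi i).2
end

section
/- Fix x_t ∈ X (the capped simplex with integer capacity k) with all coordinates positive, a gradient g ≥ 0 (coordinatewise), and intermediate point y with y_i = x_{t,i} e^{η g_i} ≥ x_{t,i} for all i (so ‖y‖₁ ≥ k). Let x_{t+1} be the Bregman projection of y onto X under the neg-entropy mirror map. Then for every coordinate i with g_i = 0, x_{t+1,i} ≤ x_{t,i}. -/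
/-! Suppose `x i < xnext i` for a coordinate with `g i = 0`, so that `y i = x i`. Moving a little
mass from a coordinate `i` to an uncapped coordinate `j` changes the divergence to first order by
`ε (log (xnext j / y j) - log (xnext i / y i))`, so at the minimiser `xnext i / y i ≤ xnext j / y j`
whenever `xnext j < 1`. Hence every uncapped coordinate has `xnext j > y j ≥ x j`, every capped one
has `xnext j = 1 ≥ x j`, and `∑ xnext > ∑ x`, although both sums equal `k`. -/

open Real Finset Filter Topology

noncomputable def negEntropyBregman {ι : Type*} [Fintype ι] (y z : ι → ℝ) : ℝ :=
  (∑ i, z i * log (z i)) - (∑ i, y i * log (y i)) - ∑ i, (1 + log (y i)) * (z i - y i)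

def posCappedSimplex (ι : Type*) [Fintype ι] (k : ℝ) : Set (ι → ℝ) :=
  {z | (∀ i, z i ∈ Set.Icc (0 : ℝ) 1) ∧ ∑ i, z i = k} ∩ {z | ∀ i, 0 < z i}

lemma Real.mul_log_sub_mul_log_le {s t : ℝ} (hs : 0 ≤ s) (ht : 0 < t) :
    t * log t - s * log s ≤ (t - s) * (1 + log t) := by
  rcases hs.eq_or_lt with rfl | hs
  · simp only [zero_mul, sub_zero, mul_add, mul_one]
    linarith
  have hlog : s * (log t - log s) ≤ t - s := calc
    s * (log t - log s) = s * log (t / s) := by rw [log_div ht.ne' hs.ne']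
    _ ≤ s * (t / s - 1) := by gcongr; exact log_le_sub_one_of_pos (div_pos ht hs)
    _ = t - s := by field_simp
  nlinarith

lemma exists_pos_transfer {a b c d : ℝ} (ha : 0 < a) (hb : b < 1) (h : b * c < a * d) :
    ∃ ε > 0, ε < a ∧ b + ε < 1 ∧ (b + ε) * c < (a - ε) * d := by
  have hsmall : ∀ᶠ ε in 𝓝 (0 : ℝ), ε < a ∧ b + ε < 1 ∧ (b + ε) * c < (a - ε) * d :=
    (eventually_lt_nhds ha).and <|
      (ContinuousAt.eventually_lt (by fun_prop) continuousAt_const (by simpa using hb)).and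
        (ContinuousAt.eventually_lt (by fun_prop) (by fun_prop) (by simpa using h))
  have hpos : ∀ᶠ ε in 𝓝[>] (0 : ℝ), 0 < ε := self_mem_nhdsWithin
  exact (hpos.and (nhdsWithin_le_nhds hsmall)).exists

lemma negEntropyBregman_sub_le {ι : Type*} [Fintype ι] {y z w : ι → ℝ} (hz : ∀ i, 0 < z i)
    (hw : ∀ i, 0 ≤ w i) :
    negEntropyBregman y z - negEntropyBregman y w ≤
      ∑ i, (z i - w i) * (log (z i) - log (y i)) := by
  have hsplit : negEntropyBregman y z - negEntropyBregman y w =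
      ∑ i, (z i * log (z i) - w i * log (w i) - (1 + log (y i)) * (z i - w i)) := by
    simp only [negEntropyBregman, sum_sub_distrib, mul_sub]
    ring
  rw [hsplit]
  gcongr with i
  linarith [mul_log_sub_mul_log_le (hw i) (hz i)]

section MoveMass

variable {ι : Type*} [DecidableEq ι] (w : ι → ℝ) (i j : ι) (ε : ℝ)

def moveMass : ι → ℝ := w + ε • (Pi.single j 1 - Pi.single i 1)

lemma moveMass_sub_apply (m : ι) :
    moveMass w i j ε m - w m = ε * ((Pi.single j 1 : ι → ℝ) m - (Pi.single i 1 : ι → ℝ) m) := by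
  simp [moveMass]

lemma sum_moveMass [Fintype ι] : ∑ m, moveMass w i j ε m = ∑ m, w m := by
  simp [moveMass, sum_add_distrib, ← mul_sum]

variable {w i j ε}

lemma moveMass_apply_left (hij : i ≠ j) : moveMass w i j ε i = w i - ε := by
  simp [moveMass, hij, sub_eq_add_neg]

lemma moveMass_apply_right (hij : i ≠ j) : moveMass w i j ε j = w j + ε := by
  simp [moveMass, hij.symm]

lemma moveMass_mem_Ioc (hij : i ≠ j) (hw : ∀ m, w m ∈ Set.Ioc 0 1) (hε : 0 < ε)
    (hεi : ε < w i) (hεj : w j + ε ≤ 1) (m : ι) : moveMass w i j ε m ∈ Set.Ioc 0 1 := by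
  have hwi := (hw i).2
  have hwj := (hw j).1
  rcases eq_or_ne m i with rfl | hmi
  · rw [moveMass_apply_left hij]; constructor <;> linarith
  rcases eq_or_ne m j with rfl | hmj
  · rw [moveMass_apply_right hij]; constructor <;> linarith
  · simpa [moveMass, hmi, hmj] using hw m

lemma negEntropyBregman_moveMass_sub_le [Fintype ι] {y : ι → ℝ} (hw : ∀ m, 0 ≤ w m)
    (hz : ∀ m, 0 < moveMass w i j ε m) :
    negEntropyBregman y (moveMass w i j ε) - negEntropyBregman y w ≤
      ε * ((log (moveMass w i j ε j) - log (y j)) - (log (moveMass w i j ε i) - log (y i))) := by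
  refine (negEntropyBregman_sub_le hz hw).trans_eq ?_
  simp only [moveMass_sub_apply, mul_sub, sub_mul, sum_sub_distrib, Pi.single_apply]
  simp
  ring

end MoveMass

lemma mul_le_mul_of_isMinOn_negEntropyBregman {ι : Type*} [Fintype ι] {k : ℝ} {y w : ι → ℝ}
    (hy : ∀ m, 0 < y m) (hw : w ∈ posCappedSimplex ι k)
    (hmin : IsMinOn (negEntropyBregman y) (posCappedSimplex ι k) w) (i : ι) {j : ι}
    (hj : w j < 1) : w i * y j ≤ w j * y i := by
  classical
  obtain ⟨⟨hw01, hwsum⟩, hwpos⟩ := hw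
  by_contra! hlt
  have hij : i ≠ j := by rintro rfl; exact hlt.false
  obtain ⟨ε, hε, hεi, hεj, hratio⟩ := exists_pos_transfer (hwpos i) hj hlt
  have hz := moveMass_mem_Ioc hij (fun m => ⟨hwpos m, (hw01 m).2⟩) hε hεi hεj.le
  have hzS : moveMass w i j ε ∈ posCappedSimplex ι k :=
    ⟨⟨fun m => Set.Ioc_subset_Icc_self (hz m), (sum_moveMass w i j ε).trans hwsum⟩,
      fun m => (hz m).1⟩
  have hlog : log (moveMass w i j ε j) - log (y j) < log (moveMass w i j ε i) - log (y i) := by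
    have hwj : 0 < w j + ε := add_pos (hwpos j) hε
    have := log_lt_log (mul_pos hwj (hy i)) hratio
    rw [log_mul hwj.ne' (hy i).ne', log_mul (by linarith) (hy j).ne'] at this
    rw [moveMass_apply_left hij, moveMass_apply_right hij]
    linarith
  have hdecr := negEntropyBregman_moveMass_sub_le (y := y) (fun m => (hwpos m).le)
    (fun m => (hz m).1)
  have hfirst := mul_neg_of_pos_of_neg hε (sub_neg.mpr hlog)
  linarith [isMinOn_iff.mp hmin _ hzS]

theorem stmt16_general (N k : ℕ)
    (x y xnext g : Fin N → ℝ) (η : ℝ) (hη : 0 ≤ η) (hg : ∀ i, 0 ≤ g i)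
    (hxX : (∀ i, x i ∈ Set.Icc (0 : ℝ) 1) ∧ ∑ i, x i = k) (hxpos : ∀ i, 0 < x i)
    (hy : ∀ i, y i = x i * Real.exp (η * g i))
    (hxnext : xnext ∈ ({z : Fin N → ℝ | (∀ i, z i ∈ Set.Icc (0 : ℝ) 1) ∧ ∑ i, z i = k}
        ∩ {z | ∀ i, 0 < z i}))
    (hproj : IsMinOn
      (fun z : Fin N → ℝ =>
        (∑ i, z i * Real.log (z i)) - (∑ i, y i * Real.log (y i)) -
          ∑ i, (1 + Real.log (y i)) * (z i - y i))
      ({z : Fin N → ℝ | (∀ i, z i ∈ Set.Icc (0 : ℝ) 1) ∧ ∑ i, z i = k}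
        ∩ {z | ∀ i, 0 < z i}) xnext) :
    ∀ i, g i = 0 → xnext i ≤ x i := by
  intro i hgi
  by_contra! hlt
  have hxy : ∀ m, x m ≤ y m := fun m => by
    rw [hy m]
    exact le_mul_of_one_le_right (hxpos m).le (one_le_exp (mul_nonneg hη (hg m)))
  have hyi : y i = x i := by simp [hy i, hgi]
  have hypos : ∀ m, 0 < y m := fun m => by rw [hy m]; exact mul_pos (hxpos m) (exp_pos _)
  have hle : ∀ m, x m ≤ xnext m := by
    intro m
    rcases lt_or_ge (xnext m) 1 with hm | hm
    · have hratio := mul_le_mul_of_isMinOn_negEntropyBregman (k := k) hypos hxnext hproj i hm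
      rw [hyi] at hratio
      have hym : x i * y m < x i * xnext m := calc
        x i * y m < xnext i * y m := mul_lt_mul_of_pos_right hlt (hypos m)
        _ ≤ xnext m * x i := hratio
        _ = x i * xnext m := mul_comm _ _
      linarith [hxy m, lt_of_mul_lt_mul_left hym (hxpos i).le]
    · linarith [(hxX.1 m).2]
  have hsum := sum_lt_sum (fun m _ => hle m) ⟨i, mem_univ i, hlt⟩
  rw [hxX.2, hxnext.1.2] at hsum
  exact hsum.false

/-- Coordinates with zero gradient never increase under the neg-entropy Bregman
projection step of OMD_NE onto the capped simplex: with `y_i = x_i e^{η g_i}` and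
`x_{t+1}` the Bregman projection of `y` onto `X ∩ ℝ_{>0}^N`, `g_i = 0 → x_{t+1,i} ≤ x_i`. -/
theorem stmt16 (N k : ℕ) (hk : 1 ≤ k) (hkN : k ≤ N)
    (x y xnext g : Fin N → ℝ) (η : ℝ) (hη : 0 ≤ η) (hg : ∀ i, 0 ≤ g i)
    (hxX : (∀ i, x i ∈ Set.Icc (0 : ℝ) 1) ∧ ∑ i, x i = k) (hxpos : ∀ i, 0 < x i)
    (hy : ∀ i, y i = x i * Real.exp (η * g i))
    (hxnext : xnext ∈ ({z : Fin N → ℝ | (∀ i, z i ∈ Set.Icc (0 : ℝ) 1) ∧ ∑ i, z i = k}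
        ∩ {z | ∀ i, 0 < z i}))
    (hproj : IsMinOn
      (fun z : Fin N → ℝ =>
        (∑ i, z i * Real.log (z i)) - (∑ i, y i * Real.log (y i)) -
          ∑ i, (1 + Real.log (y i)) * (z i - y i))
      ({z : Fin N → ℝ | (∀ i, z i ∈ Set.Icc (0 : ℝ) 1) ∧ ∑ i, z i = k}
        ∩ {z | ∀ i, 0 < z i}) xnext) :
    ∀ i, g i = 0 → xnext i ≤ x i :=
  stmt16_general N k x y xnext g η hη hg hxX hxpos hy hxnext hproj
end

section
/- Let x_t ∈ X = {x ∈ [0,1]^N : Σᵢ xᵢ = k}, let y = x_t + ηg where g has nonnegative coordinates, and let x_{t+1} = Π_X(y) be the Euclidean projection onto X. Then for every coordinate i with g_i = 0, x_{t+1,i} ≤ x_{t,i}. -/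
/-!
If the projection `x'` of `y` onto the capped simplex raised a coordinate `i` with `g i = 0`
above `x i = y i`, then, the sums of `x` and `x'` being equal, some coordinate `j` would drop
below `x j ≤ y j`. Moving mass from `i` to `j` keeps the point feasible, and optimality of `x'`
against this exchange forces `x' i - y i ≤ x' j - y j`, although the left side is positive and
the right side negative.
-/

open Finset Set

def cappedSimplex (ι : Type*) [Fintype ι] (c : ℝ) : Set (ι → ℝ) :=
  {z | (∀ i, z i ∈ Icc (0 : ℝ) 1) ∧ ∑ i, z i = c}

variable {ι : Type*}

section transferDir

variable [DecidableEq ι] {i j : ι}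

def transferDir (i j : ι) : ι → ℝ :=
  Pi.single j 1 - Pi.single i 1

lemma transferDir_apply_left (hij : i ≠ j) : transferDir i j i = -1 := by
  simp [transferDir, hij]

lemma transferDir_apply_right (hij : i ≠ j) : transferDir i j j = 1 := by
  simp [transferDir, hij.symm]

lemma transferDir_apply_of_ne {m : ι} (hmi : m ≠ i) (hmj : m ≠ j) : transferDir i j m = 0 := by
  simp [transferDir, hmi, hmj]

end transferDir

variable [Fintype ι]

lemma exists_lt_of_sum_eq_of_lt {M : Type*} [AddCommMonoid M] [LinearOrder M]
    [IsOrderedCancelAddMonoid M] {f g : ι → M} (hsum : ∑ m, f m = ∑ m, g m) {i : ι}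
    (hi : f i < g i) : ∃ j, g j < f j := by
  by_contra! hle
  exact (Finset.sum_lt_sum (fun m _ => hle m) ⟨i, mem_univ i, hi⟩).ne hsum

lemma sum_sq_add_mul_sub (x y d : ι → ℝ) (ε : ℝ) :
    ∑ m, (x m + ε * d m - y m) ^ 2 =
      ∑ m, (x m - y m) ^ 2 + 2 * ε * ∑ m, (x m - y m) * d m + ε ^ 2 * ∑ m, d m ^ 2 := by
  rw [Finset.mul_sum, Finset.mul_sum, ← Finset.sum_add_distrib, ← Finset.sum_add_distrib]
  exact Finset.sum_congr rfl fun m _ => by ring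

/-- First-order optimality of a Euclidean projection along a feasible direction `d`. -/
lemma sum_mul_sub_nonneg_of_isMinOn {S : Set (ι → ℝ)} {x y d : ι → ℝ} {δ : ℝ}
    (hx : IsMinOn (fun z : ι → ℝ => ∑ m, (z m - y m) ^ 2) S x) (hδ : 0 < δ)
    (hd : ∀ ε ∈ Ioc 0 δ, (fun m => x m + ε * d m) ∈ S) :
    0 ≤ ∑ m, (x m - y m) * d m := by
  set s := ∑ m, (x m - y m) * d m
  set q := ∑ m, d m ^ 2
  by_contra! hs
  have hq : 0 ≤ q := Finset.sum_nonneg fun m _ => sq_nonneg (d m)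
  -- a step short enough that the quadratic term `ε ^ 2 * q` cannot offset the linear one
  set ε := min δ (-s / (q + 1))
  have hε : 0 < ε := lt_min hδ (div_pos (neg_pos.2 hs) (by linarith))
  have hεq : ε * q ≤ -s := by
    have : ε * (q + 1) ≤ -s := (le_div_iff₀ (by linarith)).1 (min_le_right _ _)
    nlinarith
  have hmin : ∑ m, (x m - y m) ^ 2 ≤ ∑ m, (x m + ε * d m - y m) ^ 2 :=
    hx (hd ε ⟨hε, min_le_left _ _⟩)
  rw [sum_sq_add_mul_sub] at hmin
  nlinarith

section transfer

variable [DecidableEq ι] {i j : ι}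

lemma sum_transferDir : ∑ m, transferDir i j m = 0 := by
  simp [transferDir, Finset.sum_sub_distrib]

lemma sum_mul_transferDir (r : ι → ℝ) :
    ∑ m, r m * transferDir i j m = r j - r i := by
  simp [transferDir, mul_sub, Finset.sum_sub_distrib, Pi.single_apply]

lemma add_mul_transferDir_mem_cappedSimplex {c ε : ℝ} {x : ι → ℝ} (hx : x ∈ cappedSimplex ι c)
    (hij : i ≠ j) (hε : ε ∈ Ioc 0 (min (x i) (1 - x j))) :
    (fun m => x m + ε * transferDir i j m) ∈ cappedSimplex ι c := by
  obtain ⟨hεpos, hεle⟩ := hε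
  have hεi : ε ≤ x i := hεle.trans (min_le_left _ _)
  have hεj : ε ≤ 1 - x j := hεle.trans (min_le_right _ _)
  refine ⟨fun m => ?_, ?_⟩
  · obtain ⟨hxm0, hxm1⟩ := hx.1 m
    simp only [Set.mem_Icc]
    by_cases hmi : m = i
    · subst hmi
      rw [transferDir_apply_left hij]
      constructor <;> linarith
    by_cases hmj : m = j
    · subst hmj
      rw [transferDir_apply_right hij]
      constructor <;> linarith
    rw [transferDir_apply_of_ne hmi hmj, mul_zero, add_zero]
    exact ⟨hxm0, hxm1⟩
  · rw [Finset.sum_add_distrib, ← Finset.mul_sum, sum_transferDir, mul_zero, add_zero]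
    exact hx.2

lemma sub_le_sub_of_isMinOn_cappedSimplex {c : ℝ} {x y : ι → ℝ}
    (hx : x ∈ cappedSimplex ι c)
    (hproj : IsMinOn (fun z : ι → ℝ => ∑ m, (z m - y m) ^ 2) (cappedSimplex ι c) x)
    (hij : i ≠ j) (hi : 0 < x i) (hj : x j < 1) :
    x i - y i ≤ x j - y j := by
  have h := sum_mul_sub_nonneg_of_isMinOn hproj (lt_min hi (sub_pos.2 hj))
    fun ε hε => add_mul_transferDir_mem_cappedSimplex hx hij hε
  rw [sum_mul_transferDir] at h
  linarith

end transfer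

theorem stmt17_general (N k : ℕ)
    (x y xnext g : Fin N → ℝ) (η : ℝ) (hη : 0 ≤ η) (hg : ∀ i, 0 ≤ g i)
    (hxX : (∀ i, x i ∈ Set.Icc (0 : ℝ) 1) ∧ ∑ i, x i = k)
    (hy : ∀ i, y i = x i + η * g i)
    (hxnext : (∀ i, xnext i ∈ Set.Icc (0 : ℝ) 1) ∧ ∑ i, xnext i = k)
    (hproj : IsMinOn (fun z : Fin N → ℝ => ∑ i, (z i - y i) ^ 2)
      {z : Fin N → ℝ | (∀ i, z i ∈ Set.Icc (0 : ℝ) 1) ∧ ∑ i, z i = k} xnext) :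
    ∀ i, g i = 0 → xnext i ≤ x i := by
  intro i hgi
  by_contra! hlt
  obtain ⟨j, hj⟩ := exists_lt_of_sum_eq_of_lt (hxX.2.trans hxnext.2.symm) hlt
  have hij : i ≠ j := by rintro rfl; linarith
  have hyi : y i = x i := by rw [hy i, hgi, mul_zero, add_zero]
  have hyj : x j ≤ y j := by rw [hy j]; linarith [mul_nonneg hη (hg j)]
  have hres := sub_le_sub_of_isMinOn_cappedSimplex hxnext hproj hij
    (by linarith [(hxX.1 i).1]) (by linarith [(hxX.1 j).2])
  linarith

/-- Coordinates with zero gradient never increase under the Euclidean projection step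
of OGD onto the capped simplex: with `y = x + ηg`, `g ≥ 0`, and `x_{t+1} = Π_X(y)`,
`g_i = 0 → x_{t+1,i} ≤ x_i`. -/
theorem stmt17 (N k : ℕ) (hk : 1 ≤ k) (hkN : k ≤ N)
    (x y xnext g : Fin N → ℝ) (η : ℝ) (hη : 0 ≤ η) (hg : ∀ i, 0 ≤ g i)
    (hxX : (∀ i, x i ∈ Set.Icc (0 : ℝ) 1) ∧ ∑ i, x i = k)
    (hy : ∀ i, y i = x i + η * g i)
    (hxnext : (∀ i, xnext i ∈ Set.Icc (0 : ℝ) 1) ∧ ∑ i, xnext i = k)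
    (hproj : IsMinOn (fun z : Fin N → ℝ => ∑ i, (z i - y i) ^ 2)
      {z : Fin N → ℝ | (∀ i, z i ∈ Set.Icc (0 : ℝ) 1) ∧ ∑ i, z i = k} xnext) :
    ∀ i, g i = 0 → xnext i ≤ x i :=
  stmt17_general N k x y xnext g η hη hg hxX hy hxnext hproj
end
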